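/- arXiv:0910.1850 — 2 statements merged into one kernel-verified Lean document; each statement's English description precedes it below -/
import Mathlib

section
/- Let 1/2 < s < 1, N ≥ 1, and let m be the I-method symbol. For any 0 ≤ θ ≤ 1, any ξ₁ with 1 ≤ |ξ₁| ≤ N/5 (medium frequency) and any ξ₂ with |ξ₂| ≥ N/4 (high frequency), one has |m(ξ₁+ξ₂) − m(ξ₂)| ≤ C·(|ξ₁|/|ξ₂|)^θ · m(ξ₂), with C independent of N, ξ₁, ξ₂. -/
/-!
Since `|g'(r)| ≤ C₀ g(r) / r`, the function `r ↦ r ^ C₀ g(r)` is nondecreasing, so `g` loses at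
most a factor `5 ^ C₀` between `r` and `r / 5`; together with the antitonicity of `g` this makes
`g` comparable to `g(|ξ₂|)` on `[|ξ₂| / 5, ∞)`, which contains both `|ξ₂|` and `|ξ₁ + ξ₂|`. The
mean value inequality on that interval gives `|m(ξ₁ + ξ₂) − m(ξ₂)| ≲ (|ξ₁| / |ξ₂|) m(ξ₂)`, and
`|ξ₁| / |ξ₂| ≤ 1` lets the exponent `1` be lowered to `θ`.
-/

open Set

section LogDerivBound

variable {g : ℝ → ℝ} {C : ℝ}

theorem monotoneOn_rpow_mul_of_abs_deriv_le (hdiff : ∀ r, 0 < r → DifferentiableAt ℝ g r)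
    (hderiv : ∀ r, 0 < r → |deriv g r| ≤ C * g r / r) :
    MonotoneOn (fun x => x ^ C * g x) (Ioi 0) := by
  have hasDeriv : ∀ x ∈ Ioi (0 : ℝ), HasDerivAt (fun x => x ^ C * g x)
      (C * x ^ (C - 1) * g x + x ^ C * deriv g x) x := fun x hx =>
    (Real.hasDerivAt_rpow_const (Or.inl (ne_of_gt hx))).mul (hdiff x hx).hasDerivAt
  refine monotoneOn_of_deriv_nonneg (convex_Ioi 0)
    (fun x hx => (hasDeriv x hx).continuousAt.continuousWithinAt)
    (fun x hx => (hasDeriv x (interior_subset hx)).differentiableAt.differentiableWithinAt)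
    fun x hx => ?_
  rw [interior_Ioi] at hx
  have hx0 : 0 < x := hx
  have hlog : 0 ≤ C * g x + x * deriv g x := by
    have h := hderiv x hx0
    rw [le_div_iff₀ hx0] at h
    nlinarith [neg_abs_le (deriv g x)]
  rw [(hasDeriv x hx).deriv, Real.rpow_sub_one hx0.ne']
  have hrepr : C * (x ^ C / x) * g x + x ^ C * deriv g x
      = x ^ C / x * (C * g x + x * deriv g x) := by
    field_simp
  rw [hrepr]
  exact mul_nonneg (div_nonneg (Real.rpow_nonneg hx0.le _) hx0.le) hlog

theorem le_div_rpow_mul_of_abs_deriv_le (hdiff : ∀ r, 0 < r → DifferentiableAt ℝ g r)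
    (hderiv : ∀ r, 0 < r → |deriv g r| ≤ C * g r / r) {x y : ℝ} (hx : 0 < x) (hxy : x ≤ y) :
    g x ≤ (y / x) ^ C * g y := by
  have hmono := monotoneOn_rpow_mul_of_abs_deriv_le hdiff hderiv hx (hx.trans_le hxy) hxy
  have hxC : 0 < x ^ C := Real.rpow_pos_of_pos hx C
  rw [Real.div_rpow (hx.trans_le hxy).le hx.le, div_mul_eq_mul_div, le_div_iff₀ hxC, mul_comm]
  exact hmono

theorem le_five_rpow_mul_of_abs_deriv_le (hC : 0 ≤ C)
    (hdiff : ∀ r, 0 < r → DifferentiableAt ℝ g r)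
    (hderiv : ∀ r, 0 < r → |deriv g r| ≤ C * g r / r) (hanti : AntitoneOn g (Ici 0))
    {x y : ℝ} (hy : 0 < y) (hgy : 0 ≤ g y) (hyx : y / 5 ≤ x) :
    g x ≤ 5 ^ C * g y := by
  have hx : 0 < x := by linarith
  rcases le_total x y with hxy | hyx'
  · refine (le_div_rpow_mul_of_abs_deriv_le hdiff hderiv hx hxy).trans ?_
    gcongr
    rw [div_le_iff₀ hx]
    linarith
  · calc g x ≤ g y := hanti (mem_Ici.2 hy.le) (mem_Ici.2 hx.le) hyx'
      _ ≤ 5 ^ C * g y := le_mul_of_one_le_left hgy (Real.one_le_rpow (by norm_num) hC)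

theorem abs_sub_le_of_abs_deriv_le (hC : 0 ≤ C)
    (hdiff : ∀ r, 0 < r → DifferentiableAt ℝ g r)
    (hderiv : ∀ r, 0 < r → |deriv g r| ≤ C * g r / r) (hanti : AntitoneOn g (Ici 0))
    {x y : ℝ} (hy : 0 < y) (hgy : 0 ≤ g y) (hxy : |x - y| ≤ 4 / 5 * y) :
    |g x - g y| ≤ 5 ^ (C + 1) * C * (|x - y| / y) * g y := by
  have hderiv' : ∀ z ∈ Ici (y / 5), ‖deriv g z‖ ≤ 5 ^ (C + 1) * C * g y / y := by
    intro z hz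
    have hz : y / 5 ≤ z := hz
    have hz0 : 0 < z := by linarith
    calc ‖deriv g z‖ ≤ C * g z / z := hderiv z hz0
      _ ≤ C * (5 ^ C * g y) / (y / 5) := by
          gcongr
          exact le_five_rpow_mul_of_abs_deriv_le hC hdiff hderiv hanti hy hgy hz
      _ = 5 ^ (C + 1) * C * g y / y := by
          rw [Real.rpow_add_one (by norm_num)]
          field_simp
  have hmvt := (convex_Ici (y / 5)).norm_image_sub_le_of_norm_deriv_le
    (fun z hz => hdiff z (by linarith [mem_Ici.1 hz])) hderiv'
    (mem_Ici.2 (by linarith : y / 5 ≤ y)) (mem_Ici.2 (by linarith [neg_abs_le (x - y)] : y / 5 ≤ x))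
  rw [Real.norm_eq_abs, Real.norm_eq_abs] at hmvt
  calc |g x - g y| ≤ 5 ^ (C + 1) * C * g y / y * |x - y| := hmvt
    _ = 5 ^ (C + 1) * C * (|x - y| / y) * g y := by ring

end LogDerivBound

theorem I_symbol_holder_shift_bound_general (s : ℝ)
    (C₀ : ℝ) (hC₀ : 0 < C₀) (θ : ℝ) (hθ1 : θ ≤ 1) :
    ∃ C : ℝ, 0 < C ∧ ∀ N : ℝ, 1 ≤ N →
      ∀ (m : EuclideanSpace ℝ (Fin 3) → ℝ) (g : ℝ → ℝ),
        (∀ ξ, m ξ = g ‖ξ‖) →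
        (∀ r : ℝ, 0 < g r) →
        AntitoneOn g (Set.Ici (0 : ℝ)) →
        (∀ r : ℝ, 0 ≤ r → r ≤ N → g r = 1) →
        (∀ r : ℝ, 2 * N ≤ r → g r = (r / N) ^ (s - 1)) →
        (∀ r : ℝ, 0 < r → DifferentiableAt ℝ g r) →
        (∀ r : ℝ, 0 < r → |deriv g r| ≤ C₀ * g r / r) →
        ∀ ξ₁ ξ₂ : EuclideanSpace ℝ (Fin 3),
          1 ≤ ‖ξ₁‖ → ‖ξ₁‖ ≤ N / 5 → N / 4 ≤ ‖ξ₂‖ →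
          |m (ξ₁ + ξ₂) - m ξ₂| ≤ C * (‖ξ₁‖ / ‖ξ₂‖) ^ θ * m ξ₂ := by
  refine ⟨5 ^ (C₀ + 1) * C₀, by positivity, ?_⟩
  intro N hN m g hm hgpos hanti _ _ hdiff hderiv ξ₁ ξ₂ hξ₁ hξ₁N hξ₂N
  have hξ₂ : 0 < ‖ξ₂‖ := by linarith
  have hshift : |‖ξ₁ + ξ₂‖ - ‖ξ₂‖| ≤ ‖ξ₁‖ := by
    simpa using abs_norm_sub_norm_le (ξ₁ + ξ₂) ξ₂
  have hratio : ‖ξ₁‖ / ‖ξ₂‖ ≤ 1 := (div_le_one hξ₂).2 (by linarith)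
  rw [hm, hm]
  calc |g ‖ξ₁ + ξ₂‖ - g ‖ξ₂‖|
      ≤ 5 ^ (C₀ + 1) * C₀ * (|‖ξ₁ + ξ₂‖ - ‖ξ₂‖| / ‖ξ₂‖) * g ‖ξ₂‖ :=
        abs_sub_le_of_abs_deriv_le hC₀.le hdiff hderiv hanti hξ₂ (hgpos _).le (by linarith)
    _ ≤ 5 ^ (C₀ + 1) * C₀ * (‖ξ₁‖ / ‖ξ₂‖) ^ θ * g ‖ξ₂‖ := by
        have := hgpos ‖ξ₂‖
        gcongr
        exact (div_le_div_of_nonneg_right hshift hξ₂.le).trans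
          (Real.self_le_rpow_of_le_one (by positivity) hratio hθ1)

/-- Hölder-continuity estimate for the I-method symbol: for `0 ≤ θ ≤ 1`, a medium
frequency `1 ≤ |ξ₁| ≤ N/5` and a high frequency `|ξ₂| ≥ N/4`,
`|m(ξ₁+ξ₂) − m(ξ₂)| ≤ C (|ξ₁|/|ξ₂|)^θ m(ξ₂)` with `C` independent of `N, ξ₁, ξ₂`. -/
theorem I_symbol_holder_shift_bound (s : ℝ) (hs0 : 1 / 2 < s) (hs1 : s < 1)
    (C₀ : ℝ) (hC₀ : 0 < C₀) (θ : ℝ) (hθ0 : 0 ≤ θ) (hθ1 : θ ≤ 1) :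
    ∃ C : ℝ, 0 < C ∧ ∀ N : ℝ, 1 ≤ N →
      ∀ (m : EuclideanSpace ℝ (Fin 3) → ℝ) (g : ℝ → ℝ),
        (∀ ξ, m ξ = g ‖ξ‖) →
        (∀ r : ℝ, 0 < g r) →
        AntitoneOn g (Set.Ici (0 : ℝ)) →
        (∀ r : ℝ, 0 ≤ r → r ≤ N → g r = 1) →
        (∀ r : ℝ, 2 * N ≤ r → g r = (r / N) ^ (s - 1)) →
        (∀ r : ℝ, 0 < r → DifferentiableAt ℝ g r) →
        (∀ r : ℝ, 0 < r → |deriv g r| ≤ C₀ * g r / r) →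
        ∀ ξ₁ ξ₂ : EuclideanSpace ℝ (Fin 3),
          1 ≤ ‖ξ₁‖ → ‖ξ₁‖ ≤ N / 5 → N / 4 ≤ ‖ξ₂‖ →
          |m (ξ₁ + ξ₂) - m ξ₂| ≤ C * (‖ξ₁‖ / ‖ξ₂‖) ^ θ * m ξ₂ :=
  I_symbol_holder_shift_bound_general s C₀ hC₀ θ hθ1
end

section
/- Let ξ₀, ξ₁, ξ₂ ∈ ℝ³ with ξ₀+ξ₁+ξ₂ = 0 and τ₀, τ₁, τ₂ ∈ ℝ. Then the null-form symbol satisfies |ξ₁ ∧ ξ₂| ≤ C |ξ₀|^{1/2} |ξ₁|^{1/2} |ξ₂|^{1/2} (⟨τ₀+τ₁+τ₂⟩ + λ₀ + λ₁ + λ₂)^{1/2}, where |ξ₁ ∧ ξ₂| denotes the Euclidean norm of the wedge product (cross product) and λ_j := ⟨|ξ_j| − |τ_j|⟩. -/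
/-!
`|ξ₁ ∧ ξ₂|` is twice the area of the triangle with sides `a, b, c = |ξ₁|, |ξ₂|, |ξ₀|`, so by
Heron's formula `4 |ξ₁ ∧ ξ₂|² = (a + b + c)(a + b - c)(b + c - a)(c + a - b)`. Bounding the first
factor by three times the longest side and the two larger defects by twice the shorter sides gives
`|ξ₁ ∧ ξ₂|² ≤ 3abc · d`, where `d` is the smallest of the three defects `a + b - c, …`.
On the modulation side, the same defect for `|τ₀|, |τ₁|, |τ₂|` is at most `|τ₀ + τ₁ + τ₂|`,
and replacing `|τⱼ|` by `|ξⱼ|` costs at most `λ₀ + λ₁ + λ₂`.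
-/

noncomputable def triangleDefect (a b c : ℝ) : ℝ := min (a + b - c) (min (b + c - a) (c + a - b))

theorem triangleDefect_le_add_abs_sub (a b c a' b' c' : ℝ) :
    triangleDefect a b c ≤ triangleDefect a' b' c' + (|a - a'| + |b - b'| + |c - c'|) := by
  have ha := le_abs_self (a - a'); have ha' := neg_le_abs (a - a')
  have hb := le_abs_self (b - b'); have hb' := neg_le_abs (b - b')
  have hc := le_abs_self (c - c'); have hc' := neg_le_abs (c - c')
  rw [triangleDefect, triangleDefect, ← min_add_add_right, ← min_add_add_right]
  exact min_le_min (by linarith) (min_le_min (by linarith) (by linarith))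

theorem abs_add_abs_sub_abs_le_abs_add {x y z : ℝ} (hx : |x| ≤ |z|) (hy : |y| ≤ |z|) :
    |x| + |y| - |z| ≤ |x + y + z| := by
  rcases abs_cases x with ⟨h1, h1'⟩ | ⟨h1, h1'⟩ <;>
  rcases abs_cases y with ⟨h2, h2'⟩ | ⟨h2, h2'⟩ <;>
  rcases abs_cases z with ⟨h3, h3'⟩ | ⟨h3, h3'⟩ <;>
  rcases abs_cases (x + y + z) with ⟨h4, h4'⟩ | ⟨h4, h4'⟩ <;>
  linarith

theorem triangleDefect_abs_le_abs_add (x y z : ℝ) :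
    triangleDefect |x| |y| |z| ≤ |x + y + z| := by
  obtain ⟨hxz, hyz⟩ | ⟨hyx, hzx⟩ | ⟨hzy, hxy⟩ :
      (|x| ≤ |z| ∧ |y| ≤ |z|) ∨ (|y| ≤ |x| ∧ |z| ≤ |x|) ∨ (|z| ≤ |y| ∧ |x| ≤ |y|) := by
    grind
  · exact (min_le_left _ _).trans (abs_add_abs_sub_abs_le_abs_add hxz hyz)
  · refine (min_le_right _ _).trans <| (min_le_left _ _).trans ?_
    simpa only [add_comm, add_left_comm] using abs_add_abs_sub_abs_le_abs_add hyx hzx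
  · refine (min_le_right _ _).trans <| (min_le_right _ _).trans ?_
    simpa only [add_comm, add_left_comm] using abs_add_abs_sub_abs_le_abs_add hzy hxy

theorem triangleDefect_eq_of_le {a b c : ℝ} (hac : a ≤ c) (hbc : b ≤ c) :
    triangleDefect a b c = a + b - c :=
  min_eq_left (le_min (by linarith) (by linarith))

theorem triangleDefect_rotate (a b c : ℝ) : triangleDefect a b c = triangleDefect b c a := by
  rw [triangleDefect, triangleDefect, min_left_comm, min_comm (a + b - c)]

theorem heron_le_of_le_of_le {a b c : ℝ} (hc : c ≤ a + b) (hac : a ≤ c) (hbc : b ≤ c) :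
    (a + b + c) * (a + b - c) * (b + c - a) * (c + a - b) ≤ 12 * a * b * c * (a + b - c) := by
  have ha : 0 ≤ a := by linarith
  have hb : 0 ≤ b := by linarith
  calc (a + b + c) * (a + b - c) * (b + c - a) * (c + a - b)
      ≤ (3 * c) * (a + b - c) * (2 * b) * (2 * a) := by
        have hd : 0 ≤ a + b - c := by linarith
        gcongr ?_ * _ * ?_ * ?_ <;> first | linarith | (apply_rules [mul_nonneg] <;> linarith)
    _ = 12 * a * b * c * (a + b - c) := by ring

theorem heron_le_triangleDefect {a b c : ℝ} (hc : c ≤ a + b) (ha : a ≤ b + c) (hb : b ≤ c + a) :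
    (a + b + c) * (a + b - c) * (b + c - a) * (c + a - b) ≤
      12 * a * b * c * triangleDefect a b c := by
  obtain ⟨hac, hbc⟩ | ⟨hba, hca⟩ | ⟨hcb, hab⟩ :
      (a ≤ c ∧ b ≤ c) ∨ (b ≤ a ∧ c ≤ a) ∨ (c ≤ b ∧ a ≤ b) := by
    grind
  · rw [triangleDefect_eq_of_le hac hbc]
    exact heron_le_of_le_of_le hc hac hbc
  · rw [triangleDefect_rotate, triangleDefect_eq_of_le hba hca]
    linarith [heron_le_of_le_of_le ha hba hca]
  · rw [triangleDefect_rotate, triangleDefect_rotate, triangleDefect_eq_of_le hcb hab]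
    linarith [heron_le_of_le_of_le hb hcb hab]

section InnerProductSpace

variable {E : Type*} [NormedAddCommGroup E] [InnerProductSpace ℝ E]

theorem four_mul_gram_eq_heron (u v : E) :
    4 * (‖u‖ ^ 2 * ‖v‖ ^ 2 - inner ℝ u v ^ 2) =
      (‖u‖ + ‖v‖ + ‖u + v‖) * (‖u‖ + ‖v‖ - ‖u + v‖) * (‖v‖ + ‖u + v‖ - ‖u‖) *
        (‖u + v‖ + ‖u‖ - ‖v‖) := by
  have h := norm_add_sq_real u v
  linear_combination (‖u + v‖ ^ 2 + 2 * inner ℝ u v - ‖u‖ ^ 2 - ‖v‖ ^ 2) * h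

theorem gram_le_triangleDefect (u v : E) :
    ‖u‖ ^ 2 * ‖v‖ ^ 2 - inner ℝ u v ^ 2 ≤
      3 * ‖u‖ * ‖v‖ * ‖u + v‖ * triangleDefect ‖u‖ ‖v‖ ‖u + v‖ := by
  have hc : ‖u + v‖ ≤ ‖u‖ + ‖v‖ := norm_add_le u v
  have ha : ‖u‖ ≤ ‖v‖ + ‖u + v‖ := by
    simpa [add_comm] using norm_sub_le (u + v) v
  have hb : ‖v‖ ≤ ‖u + v‖ + ‖u‖ := by
    simpa using norm_sub_le (u + v) u
  linarith [four_mul_gram_eq_heron u v, heron_le_triangleDefect hc ha hb]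

end InnerProductSpace

/-- Null-form symbol bound: for frequencies `ξ₀+ξ₁+ξ₂ = 0` and modulations `τⱼ`,
`|ξ₁ ∧ ξ₂| ≲ |ξ₀|^{1/2}|ξ₁|^{1/2}|ξ₂|^{1/2} (⟨τ₀+τ₁+τ₂⟩ + λ₀+λ₁+λ₂)^{1/2}`,
where `|ξ₁ ∧ ξ₂|² = |ξ₁|²|ξ₂|² − (ξ₁·ξ₂)²` and `λⱼ = ⟨|ξⱼ| − |τⱼ|⟩` with
`⟨x⟩ = (1+x²)^{1/2}`. -/
theorem nullform_symbol_bound :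
    ∃ C : ℝ, 0 < C ∧
      ∀ ξ₀ ξ₁ ξ₂ : EuclideanSpace ℝ (Fin 3), ξ₀ + ξ₁ + ξ₂ = 0 →
      ∀ τ₀ τ₁ τ₂ : ℝ,
        Real.sqrt (‖ξ₁‖ ^ 2 * ‖ξ₂‖ ^ 2 - (inner ℝ ξ₁ ξ₂ : ℝ) ^ 2) ≤
          C * ‖ξ₀‖ ^ (1 / 2 : ℝ) * ‖ξ₁‖ ^ (1 / 2 : ℝ) * ‖ξ₂‖ ^ (1 / 2 : ℝ) *
            (Real.sqrt (1 + (τ₀ + τ₁ + τ₂) ^ 2) +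
              Real.sqrt (1 + (‖ξ₀‖ - |τ₀|) ^ 2) +
              Real.sqrt (1 + (‖ξ₁‖ - |τ₁|) ^ 2) +
              Real.sqrt (1 + (‖ξ₂‖ - |τ₂|) ^ 2)) ^ (1 / 2 : ℝ) := by
  refine ⟨√3, by positivity, fun ξ₀ ξ₁ ξ₂ hsum τ₀ τ₁ τ₂ => ?_⟩
  have hξ₀ : ‖ξ₀‖ = ‖ξ₁ + ξ₂‖ := by
    rw [← norm_neg, neg_eq_of_add_eq_zero_right (by rwa [← add_assoc])]
  set M := √(1 + (τ₀ + τ₁ + τ₂) ^ 2) + √(1 + (‖ξ₀‖ - |τ₀|) ^ 2) +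
    √(1 + (‖ξ₁‖ - |τ₁|) ^ 2) + √(1 + (‖ξ₂‖ - |τ₂|) ^ 2)
  have abs_le_bracket (x : ℝ) : |x| ≤ √(1 + x ^ 2) := Real.abs_le_sqrt (by linarith)
  have hdefect : triangleDefect ‖ξ₁‖ ‖ξ₂‖ ‖ξ₀‖ ≤ M := by
    have hperturb := triangleDefect_le_add_abs_sub ‖ξ₁‖ ‖ξ₂‖ ‖ξ₀‖ |τ₁| |τ₂| |τ₀|
    have hτ := triangleDefect_abs_le_abs_add τ₁ τ₂ τ₀
    rw [show τ₁ + τ₂ + τ₀ = τ₀ + τ₁ + τ₂ by ring] at hτ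
    linarith [abs_le_bracket (τ₀ + τ₁ + τ₂), abs_le_bracket (‖ξ₀‖ - |τ₀|),
      abs_le_bracket (‖ξ₁‖ - |τ₁|), abs_le_bracket (‖ξ₂‖ - |τ₂|)]
  have hgram : ‖ξ₁‖ ^ 2 * ‖ξ₂‖ ^ 2 - inner ℝ ξ₁ ξ₂ ^ 2 ≤ 3 * ‖ξ₁‖ * ‖ξ₂‖ * ‖ξ₀‖ * M := by
    rw [hξ₀] at hdefect ⊢
    exact (gram_le_triangleDefect ξ₁ ξ₂).trans (by gcongr)
  have hM : 0 ≤ M := by positivity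
  simp only [← Real.sqrt_eq_rpow]
  calc √(‖ξ₁‖ ^ 2 * ‖ξ₂‖ ^ 2 - inner ℝ ξ₁ ξ₂ ^ 2) ≤ √(3 * ‖ξ₁‖ * ‖ξ₂‖ * ‖ξ₀‖ * M) :=
        Real.sqrt_le_sqrt hgram
    _ = √3 * √‖ξ₀‖ * √‖ξ₁‖ * √‖ξ₂‖ * √M := by
        rw [Real.sqrt_mul' _ hM, Real.sqrt_mul' _ (norm_nonneg _),
          Real.sqrt_mul' _ (norm_nonneg _), Real.sqrt_mul' _ (norm_nonneg _)]
        ring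
end
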